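/- arXiv:2603.28443 — 3 statements merged into one kernel-verified Lean document; each statement's English description precedes it below -/
import Mathlib

section
/- Let A ∈ ℂ^{n×n} be Hermitian and τ > 0. Suppose vectors e, e', l ∈ ℂⁿ satisfy i (e' − e)/τ − A ((e' + e)/2) = l. Then ‖e'‖₂ ≤ ‖e‖₂ + τ ‖l‖₂. -/
/-!
Pair the scheme with `e' + e` and take imaginary parts. The term coming from `A` drops out,
because `⟪u, A u⟫` is real for Hermitian `A`, while `Im ⟪e' + e, (i/τ)(e' - e)⟫ = (‖e'‖² - ‖e‖²)/τ`.
Hence `‖e'‖² - ‖e‖² = τ Im ⟪e' + e, l⟫ ≤ τ (‖e'‖ + ‖e‖) ‖l‖`, and dividing by `‖e'‖ + ‖e‖`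
gives the estimate.
-/

open Matrix

noncomputable def euclNorm {n : ℕ} (v : Fin n → ℂ) : ℝ :=
  Real.sqrt (∑ k, ‖v k‖ ^ 2)

open Complex InnerProductSpace

theorem euclNorm_eq_norm_toLp {n : ℕ} (v : Fin n → ℂ) : euclNorm v = ‖WithLp.toLp 2 v‖ := by
  simp [euclNorm, EuclideanSpace.norm_eq]

theorem re_inner_add_sub {𝕜 E : Type*} [RCLike 𝕜] [SeminormedAddCommGroup E]
    [InnerProductSpace 𝕜 E] (x y : E) : RCLike.re ⟪x + y, x - y⟫_𝕜 = ‖x‖ ^ 2 - ‖y‖ ^ 2 := by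
  simp only [inner_add_left, inner_sub_right, map_add, map_sub, inner_re_symm (𝕜 := 𝕜) y x,
    inner_self_eq_norm_sq]
  ring

theorem le_add_of_sq_sub_sq_le_mul_add {a b c : ℝ} (hb : 0 ≤ b) (hc : 0 ≤ c)
    (h : a ^ 2 - b ^ 2 ≤ c * (a + b)) : a ≤ b + c := by
  nlinarith

namespace LinearMap.IsSymmetric

variable {E : Type*} [SeminormedAddCommGroup E] [InnerProductSpace ℂ E] {T : E →ₗ[ℂ] E}
  {τ : ℝ} {x x' l : E}

theorem sq_norm_sub_sq_norm_div_eq_im_inner_crankNicolson (hT : T.IsSymmetric)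
    (h : (I / (τ : ℂ)) • (x' - x) - T ((2 : ℂ)⁻¹ • (x' + x)) = l) :
    (‖x'‖ ^ 2 - ‖x‖ ^ 2) / τ = im ⟪x' + x, l⟫_ℂ := by
  have hT_real : im ⟪x' + x, T (x' + x)⟫_ℂ = 0 := hT.im_inner_self_apply _
  have hI : I / (τ : ℂ) = (τ⁻¹ : ℝ) * I := by push_cast; ring
  rw [← h, inner_sub_right, inner_smul_right, map_smul, inner_smul_right,
    ← re_inner_add_sub (𝕜 := ℂ), hI]
  simp only [sub_im, mul_im, mul_re, hT_real, ofReal_re, ofReal_im, I_re, I_im, inv_im, im_ofNat,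
    neg_zero, zero_div, RCLike.re_to_complex]
  ring

theorem norm_le_norm_add_mul_norm_crankNicolson (hT : T.IsSymmetric) (hτ : 0 < τ)
    (h : (I / (τ : ℂ)) • (x' - x) - T ((2 : ℂ)⁻¹ • (x' + x)) = l) :
    ‖x'‖ ≤ ‖x‖ + τ * ‖l‖ := by
  have energy : ‖x'‖ ^ 2 - ‖x‖ ^ 2 = τ * im ⟪x' + x, l⟫_ℂ := by
    rw [← hT.sq_norm_sub_sq_norm_div_eq_im_inner_crankNicolson h, mul_div_cancel₀ _ hτ.ne']
  have im_le : im ⟪x' + x, l⟫_ℂ ≤ (‖x'‖ + ‖x‖) * ‖l‖ :=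
    (im_le_norm _).trans <| (norm_inner_le_norm _ _).trans <|
      mul_le_mul_of_nonneg_right (norm_add_le _ _) (norm_nonneg _)
  refine le_add_of_sq_sub_sq_le_mul_add (norm_nonneg _) (by positivity) ?_
  rw [energy]
  linarith [mul_le_mul_of_nonneg_left im_le hτ.le]

end LinearMap.IsSymmetric

/-- If `A ∈ ℂ^{n×n}` is Hermitian, `τ > 0`, and vectors `e, e', l ∈ ℂⁿ`
satisfy `i (e' − e)/τ − A ((e' + e)/2) = l`, then `‖e'‖₂ ≤ ‖e‖₂ + τ ‖l‖₂`. -/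
theorem cnDMD_one_step_training_estimate (n : ℕ) (A : Matrix (Fin n) (Fin n) ℂ)
    (hA : A.IsHermitian) (τ : ℝ) (hτ : 0 < τ) (e e' l : Fin n → ℂ)
    (h : (Complex.I / (τ : ℂ)) • (e' - e) - A.mulVec ((2 : ℂ)⁻¹ • (e' + e)) = l) :
    euclNorm e' ≤ euclNorm e + τ * euclNorm l := by
  have h_euclidean := congrArg (WithLp.toLp 2) h
  simp only [WithLp.toLp_sub, WithLp.toLp_smul] at h_euclidean
  simp only [euclNorm_eq_norm_toLp]
  exact (isSymmetric_toEuclideanLin_iff.mpr hA).norm_le_norm_add_mul_norm_crankNicolson hτ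
    h_euclidean
end

section
/- (Reduced closed form of the CN-DMD iteration, Subsection 3.2.3.) Let n, r be positive integers, let U ∈ ℂ^{n×r} satisfy U* U = I_r, let λ_1, …, λ_r be real numbers, and set Ã := U diag(λ_1, …, λ_r) U* ∈ ℂ^{n×n}. Let τ > 0 and let the sequence (x_k)_{k≥0} in ℂⁿ satisfy x_{k+1} = (I + i(τ/2)Ã)⁻¹ (I − i(τ/2)Ã) x_k for all k ≥ 0. Define the diagonal matrix D = diag(d_1, …, d_r) with d_j = (1 − i(τ/2)λ_j) / (1 + i(τ/2)λ_j). Then for every k ∈ ℕ, x_k = U D^k U* x_0 + (I − U U*) x_0. -/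
open Matrix

private lemma cn_prod_aux {n r : ℕ} (U : Matrix (Fin n) (Fin r) ℂ) (hU : Uᴴ * U = 1)
    (E F : Matrix (Fin r) (Fin r) ℂ) :
    (U * E * Uᴴ + (1 - U * Uᴴ)) * (U * F * Uᴴ + (1 - U * Uᴴ)) =
      U * (E * F) * Uᴴ + (1 - U * Uᴴ) := by
  have hUP : Uᴴ * (1 - U * Uᴴ) = 0 := by
    rw [Matrix.mul_sub, Matrix.mul_one, ← Matrix.mul_assoc, hU, Matrix.one_mul, sub_self]
  have hPU : (1 - U * Uᴴ) * U = 0 := by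
    rw [Matrix.sub_mul, Matrix.one_mul, Matrix.mul_assoc, hU, Matrix.mul_one, sub_self]
  have hPP : (1 - U * Uᴴ) * (1 - U * Uᴴ) = 1 - U * Uᴴ := by
    rw [Matrix.mul_sub, Matrix.mul_one, ← Matrix.mul_assoc, hPU, Matrix.zero_mul, sub_zero]
  rw [Matrix.add_mul, Matrix.mul_add, Matrix.mul_add, hPP]
  have h1 : U * E * Uᴴ * (U * F * Uᴴ) = U * (E * F) * Uᴴ := by
    simp only [Matrix.mul_assoc]
    rw [← Matrix.mul_assoc Uᴴ U, hU, Matrix.one_mul]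
  have h2 : U * E * Uᴴ * (1 - U * Uᴴ) = 0 := by
    rw [Matrix.mul_assoc, hUP, Matrix.mul_zero]
  have h3 : (1 - U * Uᴴ) * (U * F * Uᴴ) = 0 := by
    rw [← Matrix.mul_assoc, ← Matrix.mul_assoc, hPU, Matrix.zero_mul, Matrix.zero_mul]
  rw [h1, h2, h3, add_zero, zero_add]

/-- **reduced closed form of the CN-DMD iteration, Subsection 3.2.3.**
Let `U ∈ ℂ^{n×r}` have orthonormal columns (`Uᴴ U = I_r`), let `λ_1, …, λ_r ∈ ℝ`, set
`Ã = U diag(λ) Uᴴ`, and let `(x_k)` satisfy the CN iteration with `Ã`.  With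
`d_j = (1 − i(τ/2)λ_j)/(1 + i(τ/2)λ_j)` and `D = diag(d)`, one has
`x_k = U D^k Uᴴ x_0 + (I − U Uᴴ) x_0` for every `k`. -/
theorem cnDMD_reduced_closed_form (n r : ℕ) (hn : 0 < n) (hr : 0 < r)
    (U : Matrix (Fin n) (Fin r) ℂ) (hU : Uᴴ * U = 1)
    (lam : Fin r → ℝ) (τ : ℝ) (hτ : 0 < τ) (x : ℕ → Fin n → ℂ)
    (hx : ∀ k : ℕ, x (k + 1) =
      ((1 + (Complex.I * ((τ : ℂ) / 2)) •
            (U * Matrix.diagonal (fun j => (lam j : ℂ)) * Uᴴ))⁻¹ *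
        (1 - (Complex.I * ((τ : ℂ) / 2)) •
            (U * Matrix.diagonal (fun j => (lam j : ℂ)) * Uᴴ))).mulVec (x k)) :
    ∀ k : ℕ, x k =
      (U * (Matrix.diagonal (fun j =>
          (1 - Complex.I * ((τ : ℂ) / 2) * (lam j : ℂ)) /
            (1 + Complex.I * ((τ : ℂ) / 2) * (lam j : ℂ)))) ^ k * Uᴴ).mulVec (x 0) +
        ((1 : Matrix (Fin n) (Fin n) ℂ) - U * Uᴴ).mulVec (x 0) := by
  set c : ℂ := Complex.I * ((τ : ℂ) / 2) with hc
  set e : Fin r → ℂ := fun j => 1 + c * (lam j : ℂ) with he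
  set f : Fin r → ℂ := fun j => 1 - c * (lam j : ℂ) with hf
  set d : Fin r → ℂ := fun j => f j / e j with hd
  have hne : ∀ j, e j ≠ 0 := by
    intro j h
    have := congrArg Complex.re h
    simp [he, hc, Complex.add_re, Complex.mul_re, Complex.div_re] at this
  set P : Matrix (Fin n) (Fin n) ℂ := 1 - U * Uᴴ with hP
  set A : Matrix (Fin n) (Fin n) ℂ := U * Matrix.diagonal (fun j => (lam j : ℂ)) * Uᴴ with hA
  -- rewrite 1 ± c•A in the factored form
  have hone : (1 : Matrix (Fin n) (Fin n) ℂ) = U * (1 : Matrix (Fin r) (Fin r) ℂ) * Uᴴ + P := by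
    rw [Matrix.mul_one, hP]; abel
  have hcA : c • A = U * Matrix.diagonal (fun j => c * (lam j : ℂ)) * Uᴴ := by
    rw [hA, ← Matrix.smul_mul, ← Matrix.mul_smul, ← Matrix.diagonal_smul]
    rfl
  have hM : (1 : Matrix (Fin n) (Fin n) ℂ) + c • A = U * Matrix.diagonal e * Uᴴ + P := by
    rw [hone, hcA]
    have : (Matrix.diagonal e : Matrix (Fin r) (Fin r) ℂ)
        = 1 + Matrix.diagonal (fun j => c * (lam j : ℂ)) := by
      rw [← Matrix.diagonal_one, ← Matrix.diagonal_add]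
    rw [this, Matrix.mul_add, Matrix.add_mul]
    abel
  have hN : (1 : Matrix (Fin n) (Fin n) ℂ) - c • A = U * Matrix.diagonal f * Uᴴ + P := by
    rw [hone, hcA]
    have : (Matrix.diagonal f : Matrix (Fin r) (Fin r) ℂ)
        = 1 - Matrix.diagonal (fun j => c * (lam j : ℂ)) := by
      rw [← Matrix.diagonal_one, ← Matrix.diagonal_sub]
    rw [this, Matrix.mul_sub, Matrix.sub_mul]
    abel
  -- the inverse
  set K : Matrix (Fin n) (Fin n) ℂ := U * Matrix.diagonal (fun j => (e j)⁻¹) * Uᴴ + P with hK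
  have hMK : ((1 : Matrix (Fin n) (Fin n) ℂ) + c • A) * K = 1 := by
    rw [hM, hK, cn_prod_aux U hU, Matrix.diagonal_mul_diagonal]
    have : (fun j => e j * (e j)⁻¹) = fun _ : Fin r => (1 : ℂ) := by
      funext j; exact mul_inv_cancel₀ (hne j)
    rw [this, Matrix.diagonal_one, Matrix.mul_one]
    abel
  have hinv : ((1 : Matrix (Fin n) (Fin n) ℂ) + c • A)⁻¹ = K :=
    Matrix.inv_eq_right_inv hMK
  -- the evolution matrix
  have hB : ((1 : Matrix (Fin n) (Fin n) ℂ) + c • A)⁻¹ *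
      ((1 : Matrix (Fin n) (Fin n) ℂ) - c • A) = U * Matrix.diagonal d * Uᴴ + P := by
    rw [hinv, hK, hN, cn_prod_aux U hU, Matrix.diagonal_mul_diagonal]
    congr 3
    funext j
    rw [hd]
    field_simp
  -- the closed form by induction
  have key : ∀ k : ℕ, x k = (U * (Matrix.diagonal d) ^ k * Uᴴ + P).mulVec (x 0) := by
    intro k
    induction k with
    | zero =>
        rw [pow_zero, Matrix.mul_one, hP]
        have : U * Uᴴ + (1 - U * Uᴴ) = (1 : Matrix (Fin n) (Fin n) ℂ) := by abel
        rw [this, Matrix.one_mulVec]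
    | succ k ih =>
        rw [hx k, ih, hB, Matrix.mulVec_mulVec, cn_prod_aux U hU, ← pow_succ']
  intro k
  rw [key k, Matrix.add_mulVec]
end

section
/- (Optimality characterization for the unitary Procrustes problem underlying piDMD, formula (2.8).) Let n, m be positive integers and X_1, X_2 ∈ ℂ^{n×m}. Suppose W ∈ ℂ^{n×n} is unitary and the matrix W X_1 X_2* is Hermitian positive semidefinite. Then for every unitary matrix L ∈ ℂ^{n×n}, ‖X_2 − W X_1‖_F ≤ ‖X_2 − L X_1‖_F. -/
open Matrix
open scoped ComplexOrder

/-- The Frobenius norm of a complex matrix: `‖M‖_F = (∑_{i,j} |M_{i,j}|²)^{1/2}`. -/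
noncomputable def frobNorm {n m : ℕ} (M : Matrix (Fin n) (Fin m) ℂ) : ℝ :=
  Real.sqrt (∑ i, ∑ j, ‖M i j‖ ^ 2)

/-!
For unitary `L`, `‖X₂ - L X₁‖_F² = ‖X₂‖_F² + ‖X₁‖_F² - 2 Re tr(L X₁ X₂ᴴ)`, so the claim is
`Re tr(L X₁ X₂ᴴ) ≤ Re tr(W X₁ X₂ᴴ)`. With `P = W X₁ X₂ᴴ ⪰ 0` and the unitary `U = L Wᴴ` this reads
`Re tr(U P) ≤ tr P`, and writing `P = Bᴴ B` the same expansion gives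
`0 ≤ ‖Bᴴ - U Bᴴ‖_F² = 2 tr P - 2 Re tr(U P)`.
-/

namespace Matrix

variable {𝕜 m n : Type*} [RCLike 𝕜] [Fintype m] [Fintype n]

lemma re_trace_mul_conjTranspose_self_nonneg (M : Matrix n m 𝕜) :
    0 ≤ RCLike.re (M * Mᴴ).trace :=
  RCLike.nonneg_iff.mp (posSemidef_self_mul_conjTranspose M).trace_nonneg |>.1

lemma re_trace_mul_conjTranspose_self (M : Matrix n m 𝕜) :
    RCLike.re (M * Mᴴ).trace = ∑ i, ∑ j, ‖M i j‖ ^ 2 := by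
  simp only [trace, diag, mul_apply, conjTranspose_apply, map_sum, RCLike.star_def,
    RCLike.mul_conj, ← RCLike.ofReal_pow, RCLike.ofReal_re]

lemma re_trace_conjTranspose (A : Matrix n n 𝕜) :
    RCLike.re (Aᴴ).trace = RCLike.re A.trace := by
  rw [trace_conjTranspose, RCLike.star_def, RCLike.conj_re]

variable [DecidableEq n]

lemma re_trace_sub_unitary_mul_mul_conjTranspose (N M : Matrix n m 𝕜) {U : Matrix n n 𝕜}
    (hU : Uᴴ * U = 1) :
    RCLike.re ((N - U * M) * (N - U * M)ᴴ).trace =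
      RCLike.re (N * Nᴴ).trace + RCLike.re (M * Mᴴ).trace - 2 * RCLike.re (U * M * Nᴴ).trace := by
  have hUMMU : (U * M * (U * M)ᴴ).trace = (M * Mᴴ).trace := by
    rw [conjTranspose_mul, ← Matrix.mul_assoc, trace_mul_comm, ← Matrix.mul_assoc,
      ← Matrix.mul_assoc, hU, Matrix.one_mul]
  have hcross : N * (U * M)ᴴ = (U * M * Nᴴ)ᴴ := by
    simp only [conjTranspose_mul, conjTranspose_conjTranspose, Matrix.mul_assoc]
  rw [conjTranspose_sub, Matrix.sub_mul, Matrix.mul_sub, Matrix.mul_sub, hcross]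
  simp only [trace_sub, map_sub, hUMMU, re_trace_conjTranspose]
  ring

open scoped MatrixOrder in
lemma re_trace_unitary_mul_le_of_posSemidef {P U : Matrix n n 𝕜} (hP : P.PosSemidef)
    (hU : Uᴴ * U = 1) : RCLike.re (U * P).trace ≤ RCLike.re P.trace := by
  obtain ⟨B, rfl⟩ := CStarAlgebra.nonneg_iff_eq_star_mul_self.mp hP.nonneg
  have hexpand := re_trace_sub_unitary_mul_mul_conjTranspose (star B) (star B) hU
  have hnonneg := re_trace_mul_conjTranspose_self_nonneg (star B - U * star B)
  simp only [star_eq_conjTranspose, conjTranspose_conjTranspose, Matrix.mul_assoc]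
    at hexpand hnonneg ⊢
  linarith

end Matrix

lemma frobNorm_eq_sqrt_re_trace {n m : ℕ} (M : Matrix (Fin n) (Fin m) ℂ) :
    frobNorm M = √(RCLike.re (M * Mᴴ).trace) := by
  rw [frobNorm, re_trace_mul_conjTranspose_self]

/-- **optimality characterization for the unitary Procrustes problem
underlying piDMD, formula (2.8).**  If `W ∈ ℂ^{n×n}` is unitary and `W X_1 X_2ᴴ` is
Hermitian positive semidefinite, then for every unitary `L ∈ ℂ^{n×n}`,
`‖X_2 − W X_1‖_F ≤ ‖X_2 − L X_1‖_F`. -/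
theorem unitary_procrustes_optimality (n m : ℕ)
    (X1 X2 : Matrix (Fin n) (Fin m) ℂ)
    (W : Matrix (Fin n) (Fin n) ℂ) (hW₁ : Wᴴ * W = 1) (hW₂ : W * Wᴴ = 1)
    (hpsd : (W * X1 * X2ᴴ).PosSemidef) :
    ∀ L : Matrix (Fin n) (Fin n) ℂ, Lᴴ * L = 1 → L * Lᴴ = 1 →
      frobNorm (X2 - W * X1) ≤ frobNorm (X2 - L * X1) := by
  intro L hL₁ _
  have hLW : (L * Wᴴ)ᴴ * (L * Wᴴ) = 1 := by
    rw [conjTranspose_mul, conjTranspose_conjTranspose, Matrix.mul_assoc,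
      ← Matrix.mul_assoc Lᴴ, hL₁, Matrix.one_mul, hW₂]
  have hLWW : L * Wᴴ * (W * X1 * X2ᴴ) = L * X1 * X2ᴴ := by
    rw [Matrix.mul_assoc L, ← Matrix.mul_assoc Wᴴ, ← Matrix.mul_assoc Wᴴ, hW₁, Matrix.one_mul,
      Matrix.mul_assoc]
  have htrace := re_trace_unitary_mul_le_of_posSemidef hpsd hLW
  rw [hLWW] at htrace
  rw [frobNorm_eq_sqrt_re_trace, frobNorm_eq_sqrt_re_trace,
    re_trace_sub_unitary_mul_mul_conjTranspose _ _ hW₁,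
    re_trace_sub_unitary_mul_mul_conjTranspose _ _ hL₁]
  gcongr
end
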